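/- Let d = 2 or d = 3, λ > 0, and σ > 2/d. Let V : ℝ^d → ℝ be continuously differentiable, nonnegative, with ⟨∇V(x), x⟩ > 0 for all x ≠ 0, and with V and ∇V of at most polynomial growth. Then for every Schwartz function u : ℝ^d → ℂ one has the identity E(u) − (1/(σd)) P(u) = (1/2 − 1/(σd)) ∫_{ℝ^d} |∇u|² dx + ∫_{ℝ^d} V(x)|u|² dx + (1/(σd)) ∫_{ℝ^d} ⟨∇V(x), x⟩ |u|² dx. Consequently, if u is not identically zero and P(u) = 0, then E(u) > 0. -/

import Mathlib

open MeasureTheory Real Complex Filter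

noncomputable section

/-- The energy functional
`E(u) = ∫ (1/2)|∇u|² + V|u|² − (λ/(σ+1))|u|^{2σ+2}`. -/
def energy {d : ℕ} (V : EuclideanSpace ℝ (Fin d) → ℝ) (lam σ : ℝ)
    (u : EuclideanSpace ℝ (Fin d) → ℂ) : ℝ :=
  ∫ x, (1 / 2 : ℝ) * ‖fderiv ℝ u x‖ ^ 2 + V x * ‖u x‖ ^ 2
    - (lam / (σ + 1)) * ‖u x‖ ^ (2 * σ + 2)

/-- The Pohozaev functional
`P(u) = ∫ |∇u|² − ⟨∇V(x), x⟩|u|² − (λσd/(σ+1))|u|^{2σ+2}`,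
where `⟨∇V(x), x⟩ = dV(x)[x]`. -/
def poho {d : ℕ} (V : EuclideanSpace ℝ (Fin d) → ℝ) (lam σ : ℝ)
    (u : EuclideanSpace ℝ (Fin d) → ℂ) : ℝ :=
  ∫ x, ‖fderiv ℝ u x‖ ^ 2 - fderiv ℝ V x x * ‖u x‖ ^ 2
    - (lam * σ * (d : ℝ) / (σ + 1)) * ‖u x‖ ^ (2 * σ + 2)

/-!
Once the four integrals `∫ |∇u|²`, `∫ V |u|²`, `∫ ⟨∇V(x), x⟩ |u|²` and `∫ |u|^{2σ+2}` are finite,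
`E` and `P` split into them and the nonlinear term cancels in `E − P/(σd)`. They are finite because
a Schwartz function decays faster than the polynomially growing weights `V` and `⟨∇V(x), x⟩`.
For the consequence, `σd > 2` makes every coefficient nonnegative, and the last integral is
strictly positive: its integrand is positive on the open set `{u ≠ 0}` minus the null set `{0}`.
-/

namespace SchwartzMap

variable {E F : Type*} [NormedAddCommGroup E] [NormedSpace ℝ E]
  [NormedAddCommGroup F] [NormedSpace ℝ F]

theorem exists_one_add_norm_rpow_mul_le (f : 𝓢(E, F)) (k : ℝ) :
    ∃ B, ∀ x, (1 + ‖x‖) ^ k * ‖f x‖ ≤ B := by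
  refine ⟨2 ^ ⌈k⌉₊ * (Finset.Iic (⌈k⌉₊, 0)).sup (fun m => SchwartzMap.seminorm ℝ m.1 m.2) f,
    fun x => ?_⟩
  have hpow : (1 + ‖x‖) ^ k ≤ (1 + ‖x‖) ^ ⌈k⌉₊ := by
    rw [← Real.rpow_natCast]
    exact Real.rpow_le_rpow_of_exponent_le (by simp) (Nat.le_ceil k)
  calc (1 + ‖x‖) ^ k * ‖f x‖ ≤ (1 + ‖x‖) ^ ⌈k⌉₊ * ‖iteratedFDeriv ℝ 0 f x‖ := by
        rw [norm_iteratedFDeriv_zero]; gcongr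
    _ ≤ _ := one_add_le_sup_seminorm_apply (m := (⌈k⌉₊, 0)) le_rfl le_rfl f x

variable [MeasurableSpace E] [BorelSpace E] [FiniteDimensional ℝ E] {μ : Measure E}
  [μ.HasTemperateGrowth]

theorem integrable_mul_norm_sq_of_abs_le (f : 𝓢(E, F)) {W : E → ℝ}
    (hW : AEStronglyMeasurable W μ) {C k : ℝ} (hWle : ∀ x, |W x| ≤ C * (1 + ‖x‖) ^ k) :
    Integrable (fun x => W x * ‖f x‖ ^ 2) μ := by
  obtain ⟨B, hB⟩ := f.exists_one_add_norm_rpow_mul_le k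
  have hC : 0 ≤ C := by simpa using (abs_nonneg _).trans (hWle 0)
  refine ((f.integrable (μ := μ)).norm.const_mul (C * B)).mono'
    (hW.mul (f.continuous.norm.pow 2).aestronglyMeasurable) (ae_of_all _ fun x => ?_)
  rw [norm_mul, Real.norm_eq_abs, norm_pow, norm_norm]
  calc |W x| * ‖f x‖ ^ 2 ≤ C * (1 + ‖x‖) ^ k * ‖f x‖ * ‖f x‖ := by
        rw [sq, ← mul_assoc]; gcongr; exact hWle x
    _ = C * ((1 + ‖x‖) ^ k * ‖f x‖) * ‖f x‖ := by ring
    _ ≤ C * B * ‖f x‖ := by gcongr; exact hB x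

end SchwartzMap

theorem abs_apply_self_le_of_opNorm_le {E : Type*} [NormedAddCommGroup E] [NormedSpace ℝ E]
    {L : E →L[ℝ] ℝ} {x : E} {C k : ℝ} (hL : ‖L‖ ≤ C * (1 + ‖x‖) ^ k) :
    |L x| ≤ C * (1 + ‖x‖) ^ (k + 1) := by
  have h1x : 0 < 1 + ‖x‖ := by positivity
  calc |L x| ≤ ‖L‖ * ‖x‖ := L.le_opNorm x
    _ ≤ C * (1 + ‖x‖) ^ k * (1 + ‖x‖) := by
        gcongr
        · exact (norm_nonneg L).trans hL
        · linarith
    _ = C * (1 + ‖x‖) ^ (k + 1) := by rw [Real.rpow_add_one h1x.ne']; ring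

theorem integral_mul_norm_sq_pos {X F : Type*} [TopologicalSpace X] [Zero X] [MeasurableSpace X]
    {μ : Measure X} [μ.IsOpenPosMeasure] [NullSingletonClass μ]
    [NormedAddCommGroup F] {W : X → ℝ} {g : X → F} (hW : ∀ x ≠ 0, 0 < W x)
    (hg : Continuous g) (hg0 : g ≠ 0) (hint : Integrable (fun x => W x * ‖g x‖ ^ 2) μ) :
    0 < ∫ x, W x * ‖g x‖ ^ 2 ∂μ := by
  have hnonneg : 0 ≤ᵐ[μ] fun x => W x * ‖g x‖ ^ 2 := by
    filter_upwards [compl_mem_ae_iff.2 (measure_singleton (μ := μ) (0 : X))] with x hx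
    exact mul_nonneg (hW x hx).le (by positivity)
  rw [integral_pos_iff_support_of_nonneg_ae hnonneg hint]
  have hsupp : Function.support g \ {0} ⊆ Function.support fun x => W x * ‖g x‖ ^ 2 :=
    fun x ⟨hgx, hx⟩ => (mul_pos (hW x hx) (pow_pos (norm_pos_iff.2 hgx) 2)).ne'
  calc 0 < μ (Function.support g) :=
        hg.isOpen_support.measure_pos μ (Function.support_nonempty_iff.2 hg0)
    _ = μ (Function.support g \ {0}) := (measure_sdiff_null (measure_singleton 0)).symm
    _ ≤ _ := measure_mono hsupp

section Functionals

variable {d : ℕ} {V : EuclideanSpace ℝ (Fin d) → ℝ} {lam σ : ℝ} {u : EuclideanSpace ℝ (Fin d) → ℂ}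

theorem energy_eq_of_integrable (hgrad : Integrable fun x => ‖fderiv ℝ u x‖ ^ 2)
    (hV : Integrable fun x => V x * ‖u x‖ ^ 2) (hpow : Integrable fun x => ‖u x‖ ^ (2 * σ + 2)) :
    energy V lam σ u = 1 / 2 * (∫ x, ‖fderiv ℝ u x‖ ^ 2) + (∫ x, V x * ‖u x‖ ^ 2)
      - lam / (σ + 1) * ∫ x, ‖u x‖ ^ (2 * σ + 2) := by
  rw [energy, integral_sub, integral_add, integral_const_mul, integral_const_mul]
  exacts [hgrad.const_mul _, hV, (hgrad.const_mul _).add hV, hpow.const_mul _]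

theorem poho_eq_of_integrable (hgrad : Integrable fun x => ‖fderiv ℝ u x‖ ^ 2)
    (hdV : Integrable fun x => fderiv ℝ V x x * ‖u x‖ ^ 2)
    (hpow : Integrable fun x => ‖u x‖ ^ (2 * σ + 2)) :
    poho V lam σ u = (∫ x, ‖fderiv ℝ u x‖ ^ 2) - (∫ x, fderiv ℝ V x x * ‖u x‖ ^ 2)
      - lam * σ * d / (σ + 1) * ∫ x, ‖u x‖ ^ (2 * σ + 2) := by
  rw [poho, integral_sub, integral_sub hgrad hdV, integral_const_mul]
  exacts [hgrad.sub hdV, hpow.const_mul _]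

theorem energy_sub_poho_eq (hσd : σ * d ≠ 0) (hgrad : Integrable fun x => ‖fderiv ℝ u x‖ ^ 2)
    (hV : Integrable fun x => V x * ‖u x‖ ^ 2)
    (hdV : Integrable fun x => fderiv ℝ V x x * ‖u x‖ ^ 2)
    (hpow : Integrable fun x => ‖u x‖ ^ (2 * σ + 2)) :
    energy V lam σ u - 1 / (σ * d) * poho V lam σ u
      = (1 / 2 - 1 / (σ * d)) * (∫ x, ‖fderiv ℝ u x‖ ^ 2) + (∫ x, V x * ‖u x‖ ^ 2)
        + 1 / (σ * d) * ∫ x, fderiv ℝ V x x * ‖u x‖ ^ 2 := by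
  obtain ⟨hσ, hd⟩ := mul_ne_zero_iff.1 hσd
  rw [energy_eq_of_integrable hgrad hV hpow, poho_eq_of_integrable hgrad hdV hpow]
  field_simp
  ring

end Functionals

theorem energy_poho_identity (d : ℕ) (hd : d = 2 ∨ d = 3) (lam σ : ℝ)
    (hσ : 2 / (d : ℝ) < σ)
    (V : EuclideanSpace ℝ (Fin d) → ℝ) (hV1 : ContDiff ℝ 1 V) (hV0 : ∀ x, 0 ≤ V x)
    (hVx : ∀ x : EuclideanSpace ℝ (Fin d), x ≠ 0 → 0 < fderiv ℝ V x x)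
    (hVg : ∃ C k : ℝ, 0 < C ∧ 0 < k ∧ ∀ x : EuclideanSpace ℝ (Fin d),
      |V x| ≤ C * (1 + ‖x‖) ^ k ∧ ‖fderiv ℝ V x‖ ≤ C * (1 + ‖x‖) ^ k)
    (u : SchwartzMap (EuclideanSpace ℝ (Fin d)) ℂ) :
    (energy V lam σ (⇑u) - (1 / (σ * (d : ℝ))) * poho V lam σ (⇑u)
      = (1 / 2 - 1 / (σ * (d : ℝ))) * (∫ x, ‖fderiv ℝ (⇑u) x‖ ^ 2)
        + (∫ x, V x * ‖u x‖ ^ 2)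
        + (1 / (σ * (d : ℝ))) * (∫ x, fderiv ℝ V x x * ‖u x‖ ^ 2)) ∧
    (u ≠ 0 → poho V lam σ (⇑u) = 0 → 0 < energy V lam σ (⇑u)) := by
  have hd0 : (0 : ℝ) < d := by rcases hd with rfl | rfl <;> norm_num
  have hσ0 : 0 < σ := lt_trans (by positivity) hσ
  have hσd : 2 < σ * d := (div_lt_iff₀ hd0).1 hσ
  obtain ⟨C, k, -, -, hVk⟩ := hVg
  have hdVc : Continuous fun x => fderiv ℝ V x x :=
    (hV1.continuous_fderiv_apply one_ne_zero).comp (continuous_id.prodMk continuous_id)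
  have hgrad : Integrable fun x => ‖fderiv ℝ (⇑u) x‖ ^ 2 := by
    simpa using ((SchwartzMap.fderivCLM ℝ _ _ u).memLp 2 volume).integrable_norm_pow two_ne_zero
  have hV : Integrable fun x => V x * ‖u x‖ ^ 2 :=
    u.integrable_mul_norm_sq_of_abs_le hV1.continuous.aestronglyMeasurable fun x => (hVk x).1
  have hdV : Integrable fun x => fderiv ℝ V x x * ‖u x‖ ^ 2 :=
    u.integrable_mul_norm_sq_of_abs_le hdVc.aestronglyMeasurable
      fun x => abs_apply_self_le_of_opNorm_le (hVk x).2
  have hpow : Integrable fun x => ‖u x‖ ^ (2 * σ + 2) := by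
    have hp : 0 < 2 * σ + 2 := by positivity
    simpa [ENNReal.toReal_ofReal hp.le] using
      (u.memLp (.ofReal (2 * σ + 2)) volume).integrable_norm_rpow (by simpa using hp) (by simp)
  have hid := energy_sub_poho_eq (lam := lam) (by positivity) hgrad hV hdV hpow
  refine ⟨hid, fun hu hP => ?_⟩
  have : Nontrivial (EuclideanSpace ℝ (Fin d)) := by
    have : NeZero d := ⟨(Nat.cast_pos.1 hd0).ne'⟩
    infer_instance
  have hdVpos := integral_mul_norm_sq_pos hVx u.continuous (DFunLike.coe_injective.ne hu) hdV
  have hgrad0 : 0 ≤ ∫ x, ‖fderiv ℝ (⇑u) x‖ ^ 2 := integral_nonneg fun x => by positivity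
  have hVint0 : 0 ≤ ∫ x, V x * ‖u x‖ ^ 2 :=
    integral_nonneg fun x => mul_nonneg (hV0 x) (by positivity)
  have hcoef : 1 / (σ * d) ≤ 1 / 2 := one_div_le_one_div_of_le two_pos hσd.le
  have hgrad_term := mul_nonneg (sub_nonneg.2 hcoef) hgrad0
  have hdV_term := mul_pos (one_div_pos.2 (two_pos.trans hσd)) hdVpos
  rw [hP, mul_zero, sub_zero] at hid
  linarith

end
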